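/- There exists a lower triangular matrix Ĉ ∈ ℝ^{m×m}, whose first and last rows and whose first column are zero and whose diagonal entries Ĉ_{ii} = 1 for 2 ≤ i ≤ m-1, such that Ā_S = Ĉ A. -/

import Mathlib

open Matrix Filter

noncomputable def projMat {n : ℕ} (a : Fin n → ℝ) : Matrix (Fin n) (Fin n) ℝ :=
  1 - (a ⬝ᵥ a)⁻¹ • Matrix.vecMulVec a a

noncomputable def vnorm {n : ℕ} (x : Fin n → ℝ) : ℝ := Real.sqrt (x ⬝ᵥ x)

/-- `x ∈ N(A)^⊥`: `x` is orthogonal to every vector of the null space of `A`. -/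
def inNullPerp {m n : ℕ} (A : Matrix (Fin m) (Fin n) ℝ) (x : Fin n → ℝ) : Prop :=
  ∀ z : Fin n → ℝ, A.mulVec z = 0 → x ⬝ᵥ z = 0

/-- `P_k` (0-indexed): the projection onto the hyperplane orthogonal to row `k` of `A`. -/
noncomputable def Pnat {m n : ℕ} (A : Matrix (Fin m) (Fin n) ℝ) (k : ℕ) :
    Matrix (Fin n) (Fin n) ℝ :=
  if h : k < m then projMat (A ⟨k, h⟩) else 1

/-- descending product `f (lo+len-1) * ⋯ * f (lo+1) * f lo` -/
noncomputable def prodDesc {α : Type*} [Monoid α] (f : ℕ → α) (lo : ℕ) : ℕ → α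
  | 0 => 1
  | k + 1 => f (lo + k) * prodDesc f lo k

/-- ascending product `f lo * f (lo+1) * ⋯ * f (lo+len-1)` -/
noncomputable def prodAsc {α : Type*} [Monoid α] (f : ℕ → α) (lo : ℕ) : ℕ → α
  | 0 => 1
  | k + 1 => prodAsc f lo k * f (lo + k)

/-- `Q_j = P_m ⋯ P_{j+1}` (paper indices); here `j : Fin m` is 0-indexed. -/
noncomputable def Qmat {m n : ℕ} (A : Matrix (Fin m) (Fin n) ℝ) (j : Fin m) :
    Matrix (Fin n) (Fin n) ℝ :=
  prodDesc (Pnat A) ((j : ℕ) + 1) (m - 1 - (j : ℕ))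

/-- `Q = P_m P_{m-1} ⋯ P_1`. -/
noncomputable def Qfull {m n : ℕ} (A : Matrix (Fin m) (Fin n) ℝ) : Matrix (Fin n) (Fin n) ℝ :=
  prodDesc (Pnat A) 0 m

/-- `A_S = (Q_1 a_1, …, Q_m a_m)ᵀ`. -/
noncomputable def ASmat {m n : ℕ} (A : Matrix (Fin m) (Fin n) ℝ) : Matrix (Fin m) (Fin n) ℝ :=
  fun i => (Qmat A i).mulVec (A i)

/-- `M = diag (1/‖a_1‖², …, 1/‖a_m‖²)`. -/
noncomputable def Mdiag {m n : ℕ} (A : Matrix (Fin m) (Fin n) ℝ) : Matrix (Fin m) (Fin m) ℝ :=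
  Matrix.diagonal fun i => (A i ⬝ᵥ A i)⁻¹

/-- `Q̄_1 = Q̄_m = 0`, `Q̄_2 = I`, `Q̄_i = P_2 ⋯ P_{i-1}` (paper indices); `i : Fin m` 0-indexed. -/
noncomputable def barQmat {m n : ℕ} (A : Matrix (Fin m) (Fin n) ℝ) (i : Fin m) :
    Matrix (Fin n) (Fin n) ℝ :=
  if (i : ℕ) = 0 ∨ (i : ℕ) = m - 1 then 0 else prodAsc (Pnat A) 1 ((i : ℕ) - 1)

/-- `Q̄ = P_2 P_3 ⋯ P_{m-1}`. -/
noncomputable def barQfull {m n : ℕ} (A : Matrix (Fin m) (Fin n) ℝ) : Matrix (Fin n) (Fin n) ℝ :=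
  prodAsc (Pnat A) 1 (m - 2)

/-- `Ā_S = (Q̄_1 a_1, …, Q̄_m a_m)ᵀ`. -/
noncomputable def barASmat {m n : ℕ} (A : Matrix (Fin m) (Fin n) ℝ) : Matrix (Fin m) (Fin n) ℝ :=
  fun i => (barQmat A i).mulVec (A i)

/-- `h_{p,q} = a_pᵀ a_q / ‖a_q‖²`. -/
noncomputable def hcoef {m n : ℕ} (A : Matrix (Fin m) (Fin n) ℝ) (p q : Fin m) : ℝ :=
  (A p ⬝ᵥ A q) / (A q ⬝ᵥ A q)

/-!
Each `P_k` moves a vector only along `a_k` (`P_k x = x - t a_k`), so `P_2 ⋯ P_{i-1} a_i` is `a_i`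
plus a combination of `a_2, …, a_{i-1}`; these coefficients, with `1` on the diagonal, form
row `i` of `Ĉ`.
-/

open Matrix Submodule

lemma projMat_mulVec {n : ℕ} (a x : Fin n → ℝ) :
    projMat a *ᵥ x = x - ((a ⬝ᵥ a)⁻¹ * (a ⬝ᵥ x)) • a := by
  rw [projMat, sub_mulVec, one_mulVec, smul_mulVec, vecMulVec_mulVec, op_smul_eq_smul, smul_smul]

lemma projMat_mulVec_sub_mem_span {n : ℕ} (a x : Fin n → ℝ) : projMat a *ᵥ x - x ∈ ℝ ∙ a := by
  rw [projMat_mulVec, sub_sub_cancel_left]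
  exact neg_mem (smul_mem _ _ (mem_span_singleton_self a))

lemma Pnat_mulVec_sub_mem_span {m n : ℕ} (A : Matrix (Fin m) (Fin n) ℝ) (k : ℕ)
    (x : Fin n → ℝ) : Pnat A k *ᵥ x - x ∈ span ℝ (A '' {j | (j : ℕ) = k}) := by
  unfold Pnat
  split_ifs with hk
  · refine span_mono ?_ (projMat_mulVec_sub_mem_span _ _)
    rintro _ rfl
    exact ⟨⟨k, hk⟩, rfl, rfl⟩
  · simp

lemma prodAsc_mulVec_sub_mem {R ι : Type*} [Ring R] [Fintype ι] [DecidableEq ι]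
    {W : Submodule R (ι → R)}
    (f : ℕ → Matrix ι ι R) (lo : ℕ) :
    ∀ k, (∀ i < k, ∀ x, f (lo + i) *ᵥ x - x ∈ W) → ∀ x, prodAsc f lo k *ᵥ x - x ∈ W
  | 0, _, x => by simp [prodAsc]
  | k + 1, hf, x => by
    have hk := prodAsc_mulVec_sub_mem f lo k (fun i hi => hf i (by omega)) (f (lo + k) *ᵥ x)
    rw [prodAsc, ← mulVec_mulVec, ← sub_add_sub_cancel _ (f (lo + k) *ᵥ x)]
    exact add_mem hk (hf k k.lt_succ_self x)

lemma prodAsc_Pnat_mulVec_sub_mem_span {m n : ℕ} (A : Matrix (Fin m) (Fin n) ℝ) (i : Fin m)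
    (x : Fin n → ℝ) :
    prodAsc (Pnat A) 1 ((i : ℕ) - 1) *ᵥ x - x ∈ span ℝ (A '' {j | (j : ℕ) ≠ 0 ∧ j < i}) := by
  refine prodAsc_mulVec_sub_mem _ _ _
    (fun k hk y => span_mono ?_ (Pnat_mulVec_sub_mem_span A (1 + k) y)) x
  refine Set.image_mono fun j hj => ?_
  simp only [Set.mem_ofPred_eq, Fin.lt_def] at hj ⊢
  omega

lemma Matrix.exists_vecMul_eq_of_mem_span_image {R m n : Type*} [CommSemiring R] [Fintype m]
    (A : Matrix m n R) {s : Set m} {y : n → R} (hy : y ∈ span R (A '' s)) :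
    ∃ c : m → R, (∀ j ∉ s, c j = 0) ∧ c ᵥ* A = y := by
  obtain ⟨l, hl, rfl⟩ := (Finsupp.mem_span_image_iff_linearCombination R).1 hy
  refine ⟨l, fun j hj => Finsupp.notMem_support_iff.1 fun h => hj (hl h), ?_⟩
  rw [vecMul_eq_sum]
  exact (Finsupp.sum_fintype l (fun i a => a • A i) fun _ => zero_smul R _).symm

/-- there is a lower triangular `Ĉ` with zero first and last rows, zero first
column, unit diagonal entries for `2 ≤ i ≤ m-1` (paper indexing), and `Ā_S = Ĉ A`. -/
theorem stmt9 {m n : ℕ} (A : Matrix (Fin m) (Fin n) ℝ) (hm : 3 ≤ m) :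
    ∃ C : Matrix (Fin m) (Fin m) ℝ,
      (∀ i j : Fin m, i < j → C i j = 0) ∧
      (∀ j : Fin m, C ⟨0, by omega⟩ j = 0) ∧
      (∀ j : Fin m, C ⟨m - 1, by omega⟩ j = 0) ∧
      (∀ i : Fin m, C i ⟨0, by omega⟩ = 0) ∧
      (∀ i : Fin m, 1 ≤ (i : ℕ) → (i : ℕ) ≤ m - 2 → C i i = 1) ∧
      barASmat A = C * A := by
  choose c hc_supp hc using fun i =>
    A.exists_vecMul_eq_of_mem_span_image (prodAsc_Pnat_mulVec_sub_mem_span A i (A i))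
  let C : Matrix (Fin m) (Fin m) ℝ := fun i =>
    if (i : ℕ) = 0 ∨ (i : ℕ) = m - 1 then 0 else Pi.single i 1 + c i
  have hC_interior (i : Fin m) (hi : ¬((i : ℕ) = 0 ∨ (i : ℕ) = m - 1)) :
      C i = Pi.single i 1 + c i := if_neg hi
  have hC_zero (i j : Fin m) (hj : ¬((j : ℕ) ≠ 0 ∧ j ≤ i)) : C i j = 0 := by
    by_cases hi : (i : ℕ) = 0 ∨ (i : ℕ) = m - 1
    · simp [C, hi]
    · have hji : j ≠ i := by
        rintro rfl
        exact hj ⟨fun h => hi (Or.inl h), le_rfl⟩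
      rw [hC_interior i hi, Pi.add_apply, Pi.single_eq_of_ne hji,
        hc_supp i j fun h => hj ⟨h.1, h.2.le⟩, add_zero]
  refine ⟨C, fun i j hij => hC_zero i j fun h => h.2.not_gt hij, fun j => by simp [C],
    fun j => by simp [C], fun i => hC_zero i _ fun h => h.1 rfl, fun i h1 h2 => ?_, ?_⟩
  · rw [hC_interior i (by omega), Pi.add_apply, Pi.single_eq_same,
      hc_supp i i fun h => h.2.false, add_zero]
  · funext i
    rw [mul_apply_eq_vecMul, barASmat, barQmat]
    by_cases hi : (i : ℕ) = 0 ∨ (i : ℕ) = m - 1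
    · simp [C, hi]
    · rw [if_neg hi, hC_interior i hi, add_vecMul, single_one_vecMul, hc, row, add_sub_cancel]
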